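/- arXiv:1503.04500 — 4 statements merged into one kernel-verified Lean document; each statement's English description precedes it below -/
import Mathlib

section
/- Let A be an n×n real matrix, m ∈ ℝⁿ a vector with support (pattern) 𝒥, and r = A m − e_k the residual. Let ℒ = {i : r(i) ≠ 0}. If 𝒥 contains the indices of all nonzero columns of the submatrix A(ℒ,·), m minimizes ‖A m' − e_k‖ over all vectors m' supported on 𝒥, and A(ℒ,·) has full row rank, then r = 0, i.e., A m = e_k. -/
open Finset

/-- If the pattern already contains all nonzero columns of A(ℒ,·), optimality of m
forces the residual to vanish when A(ℒ,·) has full row rank. -/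
theorem stmt_2 (n : ℕ) (A : Matrix (Fin n) (Fin n) ℝ) (k : Fin n)
    (J : Set (Fin n)) (m : Fin n → ℝ)
    (hsupp : ∀ j, m j ≠ 0 → j ∈ J)
    (r : Fin n → ℝ)
    (hr : r = fun i => A.mulVec m i - (if i = k then (1:ℝ) else 0))
    (L : Set (Fin n)) (hL : L = {i | r i ≠ 0})
    (hcols : ∀ j, (∃ i ∈ L, A i j ≠ 0) → j ∈ J)
    (hopt : ∀ m' : Fin n → ℝ, (∀ j, m' j ≠ 0 → j ∈ J) →
        ∑ i, (A.mulVec m i - (if i = k then (1:ℝ) else 0)) ^ 2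
          ≤ ∑ i, (A.mulVec m' i - (if i = k then (1:ℝ) else 0)) ^ 2)
    (hrank : LinearIndependent ℝ (fun i : L => (A i : Fin n → ℝ))) :
    r = 0 := by
  classical
  have key : ∀ j, ∑ i, r i * A i j = 0 := by
    intro j
    by_cases hj : j ∈ J
    · by_contra hc
      set c := ∑ i, r i * A i j with hcdef
      set d := ∑ i, (A i j) ^ 2 with hddef
      have hd0 : 0 ≤ d := Finset.sum_nonneg fun i _ => sq_nonneg _
      set t : ℝ := -c / (d + 1) with htdef
      have hsupp' : ∀ j', (fun j' => m j' + (if j' = j then t else 0)) j' ≠ 0 → j' ∈ J := by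
        intro j' h
        by_cases h' : j' = j
        · exact h' ▸ hj
        · simp only [h', if_false, add_zero] at h
          exact hsupp j' h
      have hineq := hopt _ hsupp'
      have hmv : ∀ i, A.mulVec (fun j' => m j' + (if j' = j then t else 0)) i
          = A.mulVec m i + A i j * t := by
        intro i
        simp [Matrix.mulVec, dotProduct, mul_add, Finset.sum_add_distrib, mul_ite, mul_zero]
      have expand : ∀ i, (A.mulVec (fun j' => m j' + (if j' = j then t else 0)) i
            - (if i = k then (1:ℝ) else 0)) ^ 2
          = (A.mulVec m i - (if i = k then (1:ℝ) else 0)) ^ 2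
            + 2 * t * (r i * A i j) + t ^ 2 * (A i j) ^ 2 := by
        intro i
        rw [hmv i, hr]
        ring
      have hsum : ∑ i, (A.mulVec (fun j' => m j' + (if j' = j then t else 0)) i
            - (if i = k then (1:ℝ) else 0)) ^ 2
          = ∑ i, (A.mulVec m i - (if i = k then (1:ℝ) else 0)) ^ 2
            + 2 * t * c + t ^ 2 * d := by
        simp only [expand, Finset.sum_add_distrib, hcdef, hddef, Finset.mul_sum]
      rw [hsum] at hineq
      have h2 : 0 ≤ 2 * t * c + t ^ 2 * d := by linarith
      have hde : (0:ℝ) < d + 1 := by linarith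
      have h3 : 2 * t * c + t ^ 2 * d = -(c ^ 2 * (d + 2)) / ((d + 1) ^ 2) := by
        rw [htdef]
        field_simp
        ring
      rw [h3] at h2
      have h4 : 0 < c ^ 2 * (d + 2) / ((d + 1) ^ 2) :=
        div_pos (by positivity) (by positivity)
      rw [neg_div] at h2
      linarith
    · apply Finset.sum_eq_zero
      intro i _
      by_cases hi : r i = 0
      · simp [hi]
      · have hiL : i ∈ L := by rw [hL]; exact hi
        have hA : A i j = 0 := by
          by_contra h
          exact hj (hcols j ⟨i, hiL, h⟩)
        simp [hA]
  haveI : Fintype L := (Set.toFinite L).fintype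
  have hsumfun : ∑ i : L, r (i : Fin n) • (A (i : Fin n) : Fin n → ℝ) = 0 := by
    have h1 : ∑ i : Fin n, r i • (A i : Fin n → ℝ) = 0 := by
      funext j
      rw [Finset.sum_apply]
      simpa [Pi.smul_apply, smul_eq_mul] using key j
    have h2 : ∑ i : Fin n, r i • (A i : Fin n → ℝ)
        = ∑ i ∈ L.toFinset, r i • (A i : Fin n → ℝ) := by
      refine (Finset.sum_subset (Finset.subset_univ _) ?_).symm
      intro i _ hi
      have : r i = 0 := by
        by_contra h
        exact hi (Set.mem_toFinset.mpr (by rw [hL]; exact h))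
      simp [this]
    have h3 := Finset.sum_set_coe (s := L) (f := fun i => r i • (A i : Fin n → ℝ))
    rw [h3, ← h2, h1]
  have hzero : ∀ i : L, r (i : Fin n) = 0 :=
    Fintype.linearIndependent_iff.mp hrank (fun i => r (i : Fin n)) hsumfun
  funext i
  by_contra h
  exact h (hzero ⟨i, by rw [hL]; exact h⟩)
end

section
/- Let A be an n×n real matrix, r = A m − e_k a residual with r ≠ 0, and ℒ = {i : r(i) ≠ 0}. If m minimizes ‖A m' − e_k‖ over vectors supported on pattern 𝒥, then the set 𝒩 of indices of nonzero columns of A(ℒ,·) is not contained in 𝒥 or else A(ℒ,·) does not have full row rank; equivalently, if A(ℒ,·) has full row rank and r ≠ 0, then 𝒩 \ 𝒥 ≠ ∅, i.e., there always exists at least one new candidate index to augment the pattern. -/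
open Finset

/-- If the residual is nonzero and A(ℒ,·) has full row rank, there is always a new
candidate index outside the current pattern. -/
theorem stmt_10 (n : ℕ) (A : Matrix (Fin n) (Fin n) ℝ) (k : Fin n)
    (J : Set (Fin n)) (m : Fin n → ℝ) (hsupp : ∀ j, m j ≠ 0 → j ∈ J)
    (r : Fin n → ℝ)
    (hr : r = fun i => A.mulVec m i - (if i = k then (1:ℝ) else 0))
    (hr0 : r ≠ 0)
    (L : Set (Fin n)) (hL : L = {i | r i ≠ 0})
    (hopt : ∀ m' : Fin n → ℝ, (∀ j, m' j ≠ 0 → j ∈ J) →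
        ∑ i, (A.mulVec m i - (if i = k then (1:ℝ) else 0)) ^ 2
          ≤ ∑ i, (A.mulVec m' i - (if i = k then (1:ℝ) else 0)) ^ 2)
    (hrank : LinearIndependent ℝ (fun i : L => (A i : Fin n → ℝ))) :
    ∃ j, (∃ i ∈ L, A i j ≠ 0) ∧ j ∉ J := by
  classical
  by_contra hcon
  push_neg at hcon
  -- hcon : ∀ j, (∃ i ∈ L, A i j ≠ 0) → j ∈ J
  -- Step 1: normal equations for j ∈ J
  have key : ∀ j : Fin n, j ∈ J → ∑ i, r i * A i j = 0 := by
    intro j hj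
    set c := ∑ i, r i * A i j with hc
    set d := ∑ i, (A i j) ^ 2 with hd
    have hd0 : 0 ≤ d := Finset.sum_nonneg fun i _ => sq_nonneg _
    have hline : ∀ t : ℝ, 0 ≤ 2 * t * c + t ^ 2 * d := by
      intro t
      set m' : Fin n → ℝ := fun j' => m j' + (if j' = j then t else 0) with hm'def
      have hm' : ∀ j', m' j' ≠ 0 → j' ∈ J := by
        intro j' h
        by_cases hjj : j' = j
        · exact hjj ▸ hj
        · apply hsupp
          simpa [hm'def, hjj] using h
      have h := hopt m' hm'
      have hmv : ∀ i, A.mulVec m' i = A.mulVec m i + t * A i j := by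
        intro i
        simp only [hm'def, Matrix.mulVec, dotProduct, mul_add, Finset.sum_add_distrib,
          mul_ite, mul_zero, Finset.sum_ite_eq', Finset.mem_univ, if_true, mul_comm]
      have hrw : ∑ i, (A.mulVec m' i - (if i = k then (1:ℝ) else 0)) ^ 2
          = (∑ i, r i ^ 2) + (2 * t * c + t ^ 2 * d) := by
        rw [hc, hd, Finset.mul_sum, Finset.mul_sum, ← Finset.sum_add_distrib,
          ← Finset.sum_add_distrib]
        refine Finset.sum_congr rfl fun i _ => ?_
        rw [hmv i, hr]
        ring
      rw [hrw] at h
      have h' : ∑ i, (A.mulVec m i - (if i = k then (1:ℝ) else 0)) ^ 2 = ∑ i, r i ^ 2 := by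
        refine Finset.sum_congr rfl fun i _ => ?_
        rw [hr]
      rw [h'] at h
      linarith
    have hd1 : (0:ℝ) < d + 1 := by linarith
    have h1 := hline (-(c / (d + 1)))
    have h3 : 2 * (-(c / (d + 1))) * c + (-(c / (d + 1))) ^ 2 * d
        = -(c ^ 2 * (d + 2)) / (d + 1) ^ 2 := by
      field_simp
      ring
    rw [h3] at h1
    have hc2 : c ^ 2 ≤ 0 := by
      have hpos : (0:ℝ) < (d + 1) ^ 2 := pow_pos hd1 2
      rw [le_div_iff₀ hpos] at h1
      nlinarith
    have : c = 0 := by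
      have := sq_nonneg c
      nlinarith
    exact this
  -- Step 2: normal equations for all j
  have keyall : ∀ j : Fin n, ∑ i, r i * A i j = 0 := by
    intro j
    by_cases hj : j ∈ J
    · exact key j hj
    · refine Finset.sum_eq_zero fun i _ => ?_
      by_cases hri : r i = 0
      · simp [hri]
      · have hiL : i ∈ L := by rw [hL]; exact hri
        by_cases hA : A i j = 0
        · simp [hA]
        · exact absurd (hcon j ⟨i, hiL, hA⟩) hj
  -- Step 3: contradict linear independence
  haveI : Fintype L := (Set.toFinite L).fintype
  have hsum : ∑ i : L, r (i : Fin n) • A (i : Fin n) = (0 : Fin n → ℝ) := by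
    have h1 : ∑ i : L, r (i : Fin n) • A (i : Fin n) = ∑ i ∈ L.toFinset, r i • A i := by
      rw [← Finset.sum_set_coe]
    have h2 : ∑ i ∈ L.toFinset, r i • A i = ∑ i : Fin n, r i • A i := by
      refine Finset.sum_subset (Finset.subset_univ _) fun i _ hi => ?_
      have : r i = 0 := by
        by_contra h
        exact hi (Set.mem_toFinset.mpr (by rw [hL]; exact h))
      simp [this]
    rw [h1, h2]
    funext j
    have := keyall j
    simpa [Finset.sum_apply] using this
  have hall := Fintype.linearIndependent_iff.mp hrank (fun i : L => r (i : Fin n)) hsum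
  obtain ⟨i0, hi0⟩ := Function.ne_iff.mp hr0
  have hi0' : r i0 ≠ 0 := by simpa using hi0
  have hi0L : i0 ∈ L := by rw [hL]; exact hi0'
  exact hi0' (hall ⟨i0, hi0L⟩)
end

section
/- Let A be an n×n real matrix, 𝒥 a pattern, m the least-squares solution supported on 𝒥 with residual r = A m − e_k, and j ∉ 𝒥 an index with A e_j ≠ 0. Then the minimum residual norm ρ over the augmented pattern 𝒥 ∪ {j} restricted to updating only the new coordinate (i.e., min_μ ‖r + μ A e_j‖) satisfies ρ² = ‖r‖² − (rᵀ A e_j)²/‖A e_j‖² ≤ ‖r‖², with strict inequality if and only if rᵀ A e_j ≠ 0. Moreover, the true least-squares minimum over pattern 𝒥 ∪ {j} is at most ρ. -/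
open Finset

/-- The one-dimensional update residual ρ² = ‖r‖² − (rᵀAe_j)²/‖Ae_j‖², its optimality
properties, and the fact that the true least-squares minimum over 𝒥 ∪ {j} is at most ρ². -/
theorem stmt_11 (n : ℕ) (A : Matrix (Fin n) (Fin n) ℝ) (k : Fin n)
    (J : Set (Fin n)) (m : Fin n → ℝ) (hsupp : ∀ j, m j ≠ 0 → j ∈ J)
    (hopt : ∀ m' : Fin n → ℝ, (∀ j', m' j' ≠ 0 → j' ∈ J) →
        ∑ i, (A.mulVec m i - (if i = k then (1:ℝ) else 0)) ^ 2
          ≤ ∑ i, (A.mulVec m' i - (if i = k then (1:ℝ) else 0)) ^ 2)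
    (r : Fin n → ℝ)
    (hr : r = fun i => A.mulVec m i - (if i = k then (1:ℝ) else 0))
    (j : Fin n) (hjJ : j ∉ J) (hj : (fun i => A i j) ≠ 0)
    (ρsq : ℝ)
    (hρ : ρsq = (∑ i, (r i) ^ 2) - (∑ i, r i * A i j) ^ 2 / (∑ i, (A i j) ^ 2)) :
    (∀ μ : ℝ, ρsq ≤ ∑ i, (r i + μ * A i j) ^ 2)
    ∧ (∃ μ : ℝ, ∑ i, (r i + μ * A i j) ^ 2 = ρsq)
    ∧ ρsq ≤ ∑ i, (r i) ^ 2
    ∧ (ρsq < ∑ i, (r i) ^ 2 ↔ (∑ i, r i * A i j) ≠ 0)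
    ∧ sInf {x : ℝ | ∃ m' : Fin n → ℝ, (∀ j', m' j' ≠ 0 → j' ∈ J ∪ {j}) ∧
          x = ∑ i, (A.mulVec m' i - (if i = k then (1:ℝ) else 0)) ^ 2} ≤ ρsq := by
  set R : ℝ := ∑ i, (r i) ^ 2 with hR
  set c : ℝ := ∑ i, r i * A i j with hc
  set d : ℝ := ∑ i, (A i j) ^ 2 with hd
  -- d > 0
  have hexi : ∃ i, A i j ≠ 0 := by
    by_contra h
    push_neg at h
    exact hj (funext fun i => h i)
  obtain ⟨i0, hi0⟩ := hexi
  have hdpos : 0 < d := by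
    apply Finset.sum_pos' (fun i _ => sq_nonneg _)
    exact ⟨i0, Finset.mem_univ i0, by positivity⟩
  have hcd : c ^ 2 / d * d = c ^ 2 := div_mul_cancel₀ _ hdpos.ne'
  -- expansion of the quadratic
  have key : ∀ μ : ℝ, ∑ i, (r i + μ * A i j) ^ 2 = R + 2 * μ * c + μ ^ 2 * d := by
    intro μ
    rw [hR, hc, hd, Finset.mul_sum, Finset.mul_sum, ← Finset.sum_add_distrib,
      ← Finset.sum_add_distrib]
    exact Finset.sum_congr rfl fun i _ => by ring
  have part1 : ∀ μ : ℝ, ρsq ≤ ∑ i, (r i + μ * A i j) ^ 2 := by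
    intro μ
    rw [key μ, hρ]
    nlinarith [sq_nonneg (μ * d + c), hdpos, hcd]
  have heq : ∑ i, (r i + (-c / d) * A i j) ^ 2 = ρsq := by
    rw [key, hρ]
    field_simp
    ring
  have part3 : ρsq ≤ R := by
    rw [hρ]
    have : 0 ≤ c ^ 2 / d := div_nonneg (sq_nonneg c) hdpos.le
    linarith
  have part4 : ρsq < R ↔ c ≠ 0 := by
    rw [hρ, sub_lt_self_iff]
    constructor
    · intro h hc0
      rw [hc0] at h
      simp at h
    · intro hcne
      have : 0 < c ^ 2 := lt_of_le_of_ne (sq_nonneg c) (Ne.symm (pow_ne_zero 2 hcne))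
      exact div_pos this hdpos
  refine ⟨part1, ⟨-c / d, heq⟩, part3, part4, ?_⟩
  -- the sInf part
  set S : Set ℝ := {x : ℝ | ∃ m' : Fin n → ℝ, (∀ j', m' j' ≠ 0 → j' ∈ J ∪ {j}) ∧
      x = ∑ i, (A.mulVec m' i - (if i = k then (1:ℝ) else 0)) ^ 2} with hS
  have hbdd : BddBelow S := by
    refine ⟨0, fun x hx => ?_⟩
    obtain ⟨m', _, rfl⟩ := hx
    positivity
  set m' : Fin n → ℝ := fun j' => m j' + if j' = j then -c / d else 0 with hm'
  have hsupp' : ∀ j', m' j' ≠ 0 → j' ∈ J ∪ {j} := by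
    intro j' hne
    by_cases hjj : j' = j
    · exact Or.inr hjj
    · left
      apply hsupp
      simpa [hm', hjj] using hne
  have hmv : ∀ i, A.mulVec m' i = A.mulVec m i + A i j * (-c / d) := by
    intro i
    simp only [hm', Matrix.mulVec, dotProduct, mul_add, Finset.sum_add_distrib,
      mul_ite, mul_zero, Finset.sum_ite_eq', Finset.mem_univ, if_true]
  have hmem : ρsq ∈ S := by
    refine ⟨m', hsupp', ?_⟩
    rw [← heq]
    apply Finset.sum_congr rfl
    intro i _
    rw [hmv i, hr]
    ring
  exact csInf_le hbdd hmem
end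

section
/- Let M be the minimizer of ‖AM − I‖_F over matrices with pattern 𝒥 and let M' be obtained from M by setting to zero a set D of entries with |M(j,k)| ≤ tol_k := ε/(nnz(m_k)·‖A‖₁) for each (j,k) ∈ D, where nnz(m_k) is the number of nonzero entries in column k. Then for each column k, ‖A m'_k − e_k‖ ≤ ‖A m_k − e_k‖ + ε, where m'_k is column k of M'. -/
open Finset Matrix
open scoped Classical

/-!
Write `d := m_k - m'_k`. Then `A m'_k - e_k = (A m_k - e_k) - A d`, so by the triangle inequality it
suffices to bound `‖A d‖₂ ≤ ‖A d‖₁ ≤ ‖A‖₁ ‖d‖₁`. The vector `d` is supported on the dropped nonzero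
entries of `m_k`, each of size at most `tol_k`, so `‖d‖₁ ≤ nnz(m_k) · tol_k` and `‖A d‖₂ ≤ ε`.
-/

lemma sqrt_sum_sq_le_sum_abs {ι : Type*} [Fintype ι] (v : ι → ℝ) :
    √(∑ i, v i ^ 2) ≤ ∑ i, |v i| := by
  rw [Real.sqrt_le_left (sum_nonneg fun i _ => abs_nonneg (v i))]
  simpa only [sq_abs] using sum_sq_le_sq_sum_of_nonneg (s := univ) fun i _ => abs_nonneg (v i)

lemma sqrt_sum_sq_sub_le {ι : Type*} [Fintype ι] (u w : ι → ℝ) :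
    √(∑ i, (u i - w i) ^ 2) ≤ √(∑ i, u i ^ 2) + √(∑ i, w i ^ 2) := by
  have hnorm : ∀ v : ι → ℝ, ‖(WithLp.toLp 2 v : EuclideanSpace ℝ ι)‖ = √(∑ i, v i ^ 2) := by
    intro v
    simp only [EuclideanSpace.norm_eq, Real.norm_eq_abs, sq_abs]
  rw [← hnorm, ← hnorm, ← hnorm]
  exact norm_sub_le (WithLp.toLp 2 u : EuclideanSpace ℝ ι) (WithLp.toLp 2 w)

lemma sum_abs_mulVec_le {m n : Type*} [Fintype m] [Fintype n] (A : Matrix m n ℝ) {C : ℝ}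
    (hC : ∀ j, ∑ i, |A i j| ≤ C) (x : n → ℝ) :
    ∑ i, |(A *ᵥ x) i| ≤ C * ∑ j, |x j| :=
  calc ∑ i, |(A *ᵥ x) i|
      ≤ ∑ i, ∑ j, |A i j| * |x j| := by
        gcongr with i
        simpa only [Matrix.mulVec, dotProduct, abs_mul] using
          abs_sum_le_sum_abs (fun j => A i j * x j) univ
    _ = ∑ j, (∑ i, |A i j|) * |x j| := by rw [sum_comm]; simp only [sum_mul]
    _ ≤ ∑ j, C * |x j| := by gcongr with j; exact hC j
    _ = C * ∑ j, |x j| := (mul_sum _ _ _).symm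

lemma sum_abs_sub_dropped_le {ι : Type*} [Fintype ι] (x x' : ι → ℝ) (D : Set ι) {t : ℝ}
    (ht : 0 ≤ t) (hD : ∀ j ∈ D, |x j| ≤ t) (hx' : ∀ j, x' j = if j ∈ D then 0 else x j) :
    ∑ j, |x j - x' j| ≤ #{j | x j ≠ 0} * t := by
  rw [← sum_filter_of_ne (p := fun j => x j ≠ 0)]
  · simpa only [nsmul_eq_mul] using sum_le_card_nsmul _ _ t fun j _ => by
      rw [hx']
      split_ifs with hj
      · simpa only [sub_zero] using hD j hj
      · simpa only [sub_self, abs_zero] using ht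
  · intro j _ hne hx
    simp [hx', hx] at hne

lemma residual_le_of_dropped {m n : Type*} [Fintype m] [Fintype n] (A : Matrix m n ℝ) {C : ℝ}
    (hC : ∀ j, ∑ i, |A i j| ≤ C) (hC₀ : 0 ≤ C) (b : m → ℝ) (x x' : n → ℝ) (D : Set n) {t : ℝ}
    (ht : 0 ≤ t) (hD : ∀ j ∈ D, |x j| ≤ t) (hx' : ∀ j, x' j = if j ∈ D then 0 else x j) :
    √(∑ i, ((A *ᵥ x') i - b i) ^ 2) ≤
      √(∑ i, ((A *ᵥ x) i - b i) ^ 2) + C * (#{j | x j ≠ 0} * t) := by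
  have hsplit : ∀ i, (A *ᵥ x') i - b i = ((A *ᵥ x) i - b i) - (A *ᵥ (x - x')) i := by
    intro i
    rw [Matrix.mulVec_sub, Pi.sub_apply]
    ring
  simp only [hsplit]
  refine (sqrt_sum_sq_sub_le _ _).trans (add_le_add_right ?_ _)
  calc √(∑ i, (A *ᵥ (x - x')) i ^ 2)
      ≤ ∑ i, |(A *ᵥ (x - x')) i| := sqrt_sum_sq_le_sum_abs _
    _ ≤ C * ∑ j, |x j - x' j| := sum_abs_mulVec_le A hC _
    _ ≤ C * (#{j | x j ≠ 0} * t) := by gcongr; exact sum_abs_sub_dropped_le x x' D ht hD hx'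

lemma mul_div_self_le {a b : ℝ} (hb : 0 ≤ b) : a * (b / a) ≤ b := by
  rcases eq_or_ne a 0 with rfl | ha
  · simpa using hb
  · rw [mul_div_cancel₀ b ha]

theorem stmt_13_general (n : ℕ) (hn : 0 < n) (A : Matrix (Fin n) (Fin n) ℝ)
    (M : Matrix (Fin n) (Fin n) ℝ)
    (ε : ℝ) (hε : 0 < ε)
    (nnz : Fin n → ℕ)
    (hnnz : ∀ k, nnz k = (Finset.univ.filter (fun j => M j k ≠ 0)).card)
    (normA1 : ℝ)
    (hA1 : normA1 = Finset.univ.sup' (Finset.univ_nonempty_iff.mpr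
        ⟨⟨0, hn⟩⟩) (fun j => ∑ i, |A i j|))
    (D : Set (Fin n × Fin n))
    (hD : ∀ p ∈ D, |M p.1 p.2| ≤ ε / ((nnz p.2 : ℝ) * normA1))
    (M' : Matrix (Fin n) (Fin n) ℝ)
    (hM' : ∀ i k, M' i k = if (i, k) ∈ D then 0 else M i k) :
    ∀ k, Real.sqrt (∑ i,
        (A.mulVec (fun j => M' j k) i - (if i = k then (1:ℝ) else 0)) ^ 2)
      ≤ Real.sqrt (∑ i,
        (A.mulVec (fun j => M j k) i - (if i = k then (1:ℝ) else 0)) ^ 2) + ε := by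
  intro k
  have hcol : ∀ j, ∑ i, |A i j| ≤ normA1 := fun j =>
    hA1 ▸ le_sup' (fun j => ∑ i, |A i j|) (mem_univ j)
  have hA1₀ : 0 ≤ normA1 := (sum_nonneg fun i _ => abs_nonneg _).trans (hcol ⟨0, hn⟩)
  have hdrop := residual_le_of_dropped A hcol hA1₀ (fun i => if i = k then 1 else 0)
    (fun j => M j k) (fun j => M' j k) {j | (j, k) ∈ D} (t := ε / (nnz k * normA1)) (by positivity)
    (fun j hj => hD (j, k) hj) (fun j => hM' j k)
  rw [← hnnz k, ← mul_assoc, mul_comm normA1] at hdrop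
  -- if `nnz k * normA1 = 0` then `tol_k = ε / 0 = 0` and the bound holds with slack
  exact hdrop.trans (add_le_add_right (mul_div_self_le hε.le) _)

/-- Adaptive dropping criterion: zeroing entries of magnitude at most
ε/(nnz(m_k)·‖A‖₁) perturbs each column residual norm by at most ε. -/
theorem stmt_13 (n : ℕ) (hn : 0 < n) (A : Matrix (Fin n) (Fin n) ℝ)
    (J : Set (Fin n × Fin n)) (M : Matrix (Fin n) (Fin n) ℝ)
    (hMpat : ∀ i k, M i k ≠ 0 → (i, k) ∈ J)
    (hMopt : ∀ N : Matrix (Fin n) (Fin n) ℝ, (∀ i k, N i k ≠ 0 → (i, k) ∈ J) →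
        ∑ k, ∑ i, ((A * M - 1) i k) ^ 2 ≤ ∑ k, ∑ i, ((A * N - 1) i k) ^ 2)
    (ε : ℝ) (hε : 0 < ε)
    (nnz : Fin n → ℕ)
    (hnnz : ∀ k, nnz k = (Finset.univ.filter (fun j => M j k ≠ 0)).card)
    (normA1 : ℝ)
    (hA1 : normA1 = Finset.univ.sup' (Finset.univ_nonempty_iff.mpr
        ⟨⟨0, hn⟩⟩) (fun j => ∑ i, |A i j|))
    (D : Set (Fin n × Fin n))
    (hD : ∀ p ∈ D, |M p.1 p.2| ≤ ε / ((nnz p.2 : ℝ) * normA1))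
    (M' : Matrix (Fin n) (Fin n) ℝ)
    (hM' : ∀ i k, M' i k = if (i, k) ∈ D then 0 else M i k) :
    ∀ k, Real.sqrt (∑ i,
        (A.mulVec (fun j => M' j k) i - (if i = k then (1:ℝ) else 0)) ^ 2)
      ≤ Real.sqrt (∑ i,
        (A.mulVec (fun j => M j k) i - (if i = k then (1:ℝ) else 0)) ^ 2) + ε :=
  stmt_13_general n hn A M ε hε nnz hnnz normA1 hA1 D hD M' hM'
end
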